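/- arXiv:1305.7484 — 2 statements merged into one kernel-verified Lean document; each statement's English description precedes it below -/
import Mathlib

section
/- Suppose v ∈ C¹([0,T]×ℝⁿ), w : ℝⁿ → ℝ continuous, and continuous p₁,…,p_m : [0,T]×ℝⁿ → ℝ satisfy: (i) (L_f v)(t,x) + Σ_{i=1}^m p_i(t,x) ≤ 0 for all (t,x) ∈ [0,T]×X; (ii) p_i(t,x) ≥ |[L_g v]_i(t,x)| on [0,T]×X for each i; (iii) w(x) ≥ v(0,x) + 1 for all x ∈ X; (iv) v(T,x) ≥ 0 for all x ∈ X_T. Then for every measurable feedback u : [0,T]×ℝⁿ → U and every solution x(·) with control u such that x(t) ∈ X for all t ∈ [0,T] and x(T) ∈ X_T, one has w(x(0)) ≥ 1. -/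
/-! Along an admissible trajectory the map `t ↦ v (t, x t)` is absolutely continuous (a `C¹`
function composed with an absolutely continuous curve), and at almost every time its derivative is
`L_f v + ∑ⱼ uⱼ [L_g v]ⱼ ≤ L_f v + ∑ⱼ pⱼ ≤ 0` by (i), (ii) and `|uⱼ| ≤ 1`. Hence
`v (T, x T) ≤ v (0, x 0)`, and (iii), (iv) give `w (x 0) ≥ v (0, x 0) + 1 ≥ v (T, x T) + 1 ≥ 1`. -/

open MeasureTheory Set Filter

noncomputable section

/-- The operator `L_f v (t,x) = ∂v/∂t (t,x) + ∑ i, ∂v/∂x_i (t,x) * f_i (t,x)`,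
expressed as the Fréchet derivative of `v` at `(t,x)` applied to `(1, f (t,x))`. -/
def Lf (n : ℕ) (f : ℝ × (Fin n → ℝ) → Fin n → ℝ)
    (v : ℝ × (Fin n → ℝ) → ℝ) : ℝ × (Fin n → ℝ) → ℝ :=
  fun q => fderiv ℝ v q (1, f q)

/-- The operator `[L_g v]_j (t,x) = ∑ i, ∂v/∂x_i (t,x) * g_{ij} (t,x)`. -/
def Lg (n m : ℕ) (g : ℝ × (Fin n → ℝ) → Fin n → Fin m → ℝ)
    (v : ℝ × (Fin n → ℝ) → ℝ) : ℝ × (Fin n → ℝ) → Fin m → ℝ :=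
  fun q j => fderiv ℝ v q (0, fun i => g q i j)

/-- A Carathéodory solution of `ẋ = f(t,x) + g(t,x) u(t,x)` on `[0,T]`: an absolutely
continuous curve satisfying the corresponding integral equation. -/
def IsSolution (n m : ℕ) (T : ℝ) (f : ℝ × (Fin n → ℝ) → Fin n → ℝ)
    (g : ℝ × (Fin n → ℝ) → Fin n → Fin m → ℝ)
    (u : ℝ × (Fin n → ℝ) → Fin m → ℝ) (x : ℝ → Fin n → ℝ) : Prop :=
  ContinuousOn x (Icc 0 T) ∧
  IntervalIntegrable
    (fun s => (fun i => f (s, x s) i + ∑ j, g (s, x s) i j * u (s, x s) j)) volume 0 T ∧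
  ∀ t ∈ Icc (0:ℝ) T,
    x t = x 0 + ∫ s in (0:ℝ)..t, (fun i => f (s, x s) i + ∑ j, g (s, x s) i j * u (s, x s) j)


open Topology

namespace AbsolutelyContinuousOnInterval

variable {X Y : Type*} [PseudoMetricSpace X] [PseudoMetricSpace Y] {a b : ℝ}

theorem of_dist_le {f : ℝ → X} {g : ℝ → Y} {K : ℝ} (hg : AbsolutelyContinuousOnInterval g a b)
    (hfg : ∀ s ∈ uIcc a b, ∀ t ∈ uIcc a b, dist (f s) (f t) ≤ K * dist (g s) (g t)) :
    AbsolutelyContinuousOnInterval f a b := by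
  have hKg := Tendsto.const_mul K hg
  rw [mul_zero] at hKg
  refine squeeze_zero' (Eventually.of_forall fun _ => Finset.sum_nonneg fun _ _ => dist_nonneg)
    ?_ hKg
  filter_upwards [eventually_inf_principal.2 (Eventually.of_forall fun _ hE => hE)]
    with E hE
  rw [Finset.mul_sum]
  exact Finset.sum_le_sum fun i hi => hfg _ (hE.1 i hi).1 _ (hE.1 i hi).2

theorem prodMk {f : ℝ → X} {g : ℝ → Y} (hf : AbsolutelyContinuousOnInterval f a b)
    (hg : AbsolutelyContinuousOnInterval g a b) :
    AbsolutelyContinuousOnInterval (fun t => (f t, g t)) a b := by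
  have hfg := Tendsto.add hf hg
  rw [add_zero] at hfg
  refine squeeze_zero (fun _ => Finset.sum_nonneg fun _ _ => dist_nonneg) (fun E => ?_) hfg
  rw [← Finset.sum_add_distrib]
  exact Finset.sum_le_sum fun i _ => max_le_add_of_nonneg dist_nonneg dist_nonneg

end AbsolutelyContinuousOnInterval

theorem LocallyLipschitz.comp_absolutelyContinuousOnInterval {E F : Type*}
    [SeminormedAddCommGroup E] [PseudoMetricSpace F] {g : E → F} {f : ℝ → E} {a b : ℝ}
    (hg : LocallyLipschitz g) (hf : AbsolutelyContinuousOnInterval f a b) :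
    AbsolutelyContinuousOnInterval (g ∘ f) a b := by
  obtain ⟨K, hK⟩ := hg.locallyLipschitzOn.exists_lipschitzOnWith_of_compact
    (isCompact_uIcc.image_of_continuousOn hf.continuousOn)
  exact hf.of_dist_le fun s hs t ht =>
    hK.dist_le_mul _ (mem_image_of_mem f hs) _ (mem_image_of_mem f ht)

theorem IntervalIntegrable.absolutelyContinuousOnInterval_intervalIntegral' {E : Type*}
    [NormedAddCommGroup E] [NormedSpace ℝ E] {f : ℝ → E} {a b c : ℝ}
    (hf : IntervalIntegrable f volume a b) (hc : c ∈ uIcc a b) :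
    AbsolutelyContinuousOnInterval (fun t => ∫ s in c..t, f s) a b := by
  refine (hf.norm.absolutelyContinuousOnInterval_intervalIntegral hc).of_dist_le (K := 1)
    fun s hs t ht => ?_
  have hcs := uIcc_subset_uIcc hc hs
  have hct := uIcc_subset_uIcc hc ht
  rw [one_mul, dist_eq_norm, dist_eq_norm,
    intervalIntegral.integral_interval_sub_left (hf.mono_set hcs) (hf.mono_set hct),
    intervalIntegral.integral_interval_sub_left (hf.norm.mono_set hcs) (hf.norm.mono_set hct),
    Real.norm_eq_abs]
  exact intervalIntegral.norm_integral_le_abs_integral_norm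

section

variable {E : Type*} [NormedAddCommGroup E] [NormedSpace ℝ E] {x h : ℝ → E} {a b : ℝ}

theorem ae_hasDerivAt_of_eq_add_integral [CompleteSpace E] (hh : IntervalIntegrable h volume a b)
    (hx : ∀ t ∈ uIcc a b, x t = x a + ∫ s in a..t, h s) :
    ∀ᵐ t, t ∈ uIcc a b → HasDerivAt x (h t) t := by
  have hne : ∀ c : ℝ, ∀ᵐ t, t ≠ c := fun c => by simp [ae_iff, measure_singleton]
  filter_upwards [hh.ae_hasDerivAt_integral, hne a, hne b] with t ht hta htb htab
  have hmem : t ∈ Ioo (min a b) (max a b) := by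
    rw [mem_uIcc] at htab
    constructor <;> grind
  have hnhds : uIcc a b ∈ 𝓝 t := mem_of_superset (isOpen_Ioo.mem_nhds hmem) Ioo_subset_Icc_self
  exact ((ht htab a left_mem_uIcc).const_add (x a)).congr_of_eventuallyEq
    (Filter.mem_of_superset hnhds hx)

theorem absolutelyContinuousOnInterval_of_eq_add_integral (hh : IntervalIntegrable h volume a b)
    (hx : ∀ t ∈ uIcc a b, x t = x a + ∫ s in a..t, h s) :
    AbsolutelyContinuousOnInterval x a b :=
  (hh.absolutelyContinuousOnInterval_intervalIntegral' left_mem_uIcc).of_dist_le (K := 1)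
    fun s hs t ht => by rw [hx s hs, hx t ht, dist_add_left, one_mul]

theorem integral_fderiv_prodMk_eq_sub [CompleteSpace E] {v : ℝ × E → ℝ} (hv : ContDiff ℝ 1 v)
    (hh : IntervalIntegrable h volume a b) (hx : ∀ t ∈ uIcc a b, x t = x a + ∫ s in a..t, h s) :
    ∫ t in a..b, fderiv ℝ v (t, x t) (1, h t) = v (b, x b) - v (a, x a) := by
  have hac : AbsolutelyContinuousOnInterval (v ∘ fun t => (t, x t)) a b :=
    hv.locallyLipschitz.comp_absolutelyContinuousOnInterval
      (LipschitzWith.id.lipschitzOnWith.absolutelyContinuousOnInterval.prodMk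
        (absolutelyContinuousOnInterval_of_eq_add_integral hh hx))
  rw [← show _ = v (b, x b) - v (a, x a) from hac.integral_deriv_eq_sub]
  refine intervalIntegral.integral_congr_ae ?_
  filter_upwards [ae_hasDerivAt_of_eq_add_integral hh hx] with t ht htab
  exact (((hv.differentiable one_ne_zero _).hasFDerivAt.comp_hasDerivAt t
    ((hasDerivAt_id t).prodMk (ht (uIoc_subset_uIcc htab)))).deriv).symm

end

def closedLoopField (n m : ℕ) (f : ℝ × (Fin n → ℝ) → Fin n → ℝ)
    (g : ℝ × (Fin n → ℝ) → Fin n → Fin m → ℝ) (u : ℝ × (Fin n → ℝ) → Fin m → ℝ) :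
    ℝ × (Fin n → ℝ) → Fin n → ℝ :=
  fun q i => f q i + ∑ j, g q i j * u q j

theorem fderiv_apply_one_closedLoopField {n m : ℕ} (f : ℝ × (Fin n → ℝ) → Fin n → ℝ)
    (g : ℝ × (Fin n → ℝ) → Fin n → Fin m → ℝ) (u : ℝ × (Fin n → ℝ) → Fin m → ℝ)
    (v : ℝ × (Fin n → ℝ) → ℝ) (q : ℝ × (Fin n → ℝ)) :
    fderiv ℝ v q (1, closedLoopField n m f g u q) = Lf n f v q + ∑ j, u q j * Lg n m g v q j := by
  have hsplit : ((1 : ℝ), closedLoopField n m f g u q)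
      = (1, f q) + ∑ j, u q j • ((0 : ℝ), fun i => g q i j) := by
    ext i
    · simp [Prod.fst_sum]
    · simp [closedLoopField, Prod.snd_sum, mul_comm]
  rw [hsplit, map_add, map_sum]
  simp only [map_smul, smul_eq_mul]
  rfl

theorem fderiv_apply_one_closedLoopField_nonpos {n m : ℕ} {f : ℝ × (Fin n → ℝ) → Fin n → ℝ}
    {g : ℝ × (Fin n → ℝ) → Fin n → Fin m → ℝ} {u : ℝ × (Fin n → ℝ) → Fin m → ℝ}
    {v : ℝ × (Fin n → ℝ) → ℝ} {p : Fin m → ℝ × (Fin n → ℝ) → ℝ} {q : ℝ × (Fin n → ℝ)}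
    (hLf : Lf n f v q + ∑ j, p j q ≤ 0) (hLg : ∀ j, |Lg n m g v q j| ≤ p j q)
    (hu : ∀ j, u q j ∈ Icc (-1 : ℝ) 1) :
    fderiv ℝ v q (1, closedLoopField n m f g u q) ≤ 0 := by
  have hterm : ∀ j, u q j * Lg n m g v q j ≤ p j q := fun j => calc
    u q j * Lg n m g v q j ≤ |u q j| * |Lg n m g v q j| := (le_abs_self _).trans (abs_mul _ _).le
    _ ≤ 1 * |Lg n m g v q j| := by gcongr; exact abs_le.2 (hu j)
    _ ≤ p j q := by rw [one_mul]; exact hLg j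
  rw [fderiv_apply_one_closedLoopField]
  linarith [Finset.sum_le_sum fun j (_ : j ∈ Finset.univ) => hterm j]

theorem IsSolution.eq_add_integral {n m : ℕ} {T : ℝ} {f : ℝ × (Fin n → ℝ) → Fin n → ℝ}
    {g : ℝ × (Fin n → ℝ) → Fin n → Fin m → ℝ} {u : ℝ × (Fin n → ℝ) → Fin m → ℝ}
    {x : ℝ → Fin n → ℝ} (hx : IsSolution n m T f g u x) (hT : 0 ≤ T) :
    ∀ t ∈ uIcc 0 T, x t = x 0 + ∫ s in (0 : ℝ)..t, closedLoopField n m f g u (s, x s) := by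
  rw [uIcc_of_le hT]
  exact hx.2.2

theorem dual_feasible_implies_w_ge_one_general
    (n m : ℕ) (T : ℝ) (hT : 0 < T)
    (f : ℝ × (Fin n → ℝ) → Fin n → ℝ) (g : ℝ × (Fin n → ℝ) → Fin n → Fin m → ℝ)
    (X : Set (Fin n → ℝ))
    (XT : Set (Fin n → ℝ))
    (v : ℝ × (Fin n → ℝ) → ℝ) (hv : ContDiff ℝ 1 v)
    (w : (Fin n → ℝ) → ℝ)
    (p : Fin m → ℝ × (Fin n → ℝ) → ℝ)
    (hineq1 : ∀ q ∈ Icc (0:ℝ) T ×ˢ X, Lf n f v q + ∑ i, p i q ≤ 0)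
    (hineq2 : ∀ q ∈ Icc (0:ℝ) T ×ˢ X, ∀ i, |Lg n m g v q i| ≤ p i q)
    (hineq3 : ∀ y ∈ X, v (0, y) + 1 ≤ w y)
    (hineq4 : ∀ y ∈ XT, 0 ≤ v (T, y))
    (u : ℝ × (Fin n → ℝ) → Fin m → ℝ)
    (huU : ∀ q j, u q j ∈ Icc (-1:ℝ) 1)
    (x : ℝ → Fin n → ℝ) (hx : IsSolution n m T f g u x)
    (hxX : ∀ t ∈ Icc (0:ℝ) T, x t ∈ X) (hxT : x T ∈ XT) :
    1 ≤ w (x 0) := by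
  have hdecrease : v (T, x T) - v (0, x 0) ≤ 0 := by
    rw [← integral_fderiv_prodMk_eq_sub hv hx.2.1 (hx.eq_add_integral hT.le), ← neg_nonneg,
      ← intervalIntegral.integral_neg]
    refine intervalIntegral.integral_nonneg hT.le fun t ht => neg_nonneg.2 ?_
    exact fderiv_apply_one_closedLoopField_nonpos (hineq1 _ ⟨ht, hxX t ht⟩)
      (hineq2 _ ⟨ht, hxX t ht⟩) (huU _)
  have hstart := hineq3 (x 0) (hxX 0 ⟨le_rfl, hT.le⟩)
  linarith [hineq4 _ hxT]

theorem dual_feasible_implies_w_ge_one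
    (n m : ℕ) (T : ℝ) (hT : 0 < T)
    (f : ℝ × (Fin n → ℝ) → Fin n → ℝ) (g : ℝ × (Fin n → ℝ) → Fin n → Fin m → ℝ)
    (hf : Continuous f) (hg : Continuous g)
    (X : Set (Fin n → ℝ)) (hX : IsCompact X)
    (XT : Set (Fin n → ℝ)) (hXT : IsCompact XT) (hXTsub : XT ⊆ X)
    (v : ℝ × (Fin n → ℝ) → ℝ) (hv : ContDiff ℝ 1 v)
    (w : (Fin n → ℝ) → ℝ) (hw : Continuous w)
    (p : Fin m → ℝ × (Fin n → ℝ) → ℝ) (hp : ∀ i, Continuous (p i))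
    (hineq1 : ∀ q ∈ Icc (0:ℝ) T ×ˢ X, Lf n f v q + ∑ i, p i q ≤ 0)
    (hineq2 : ∀ q ∈ Icc (0:ℝ) T ×ˢ X, ∀ i, |Lg n m g v q i| ≤ p i q)
    (hineq3 : ∀ y ∈ X, v (0, y) + 1 ≤ w y)
    (hineq4 : ∀ y ∈ XT, 0 ≤ v (T, y))
    (u : ℝ × (Fin n → ℝ) → Fin m → ℝ) (hu : Measurable u)
    (huU : ∀ q j, u q j ∈ Icc (-1:ℝ) 1)
    (x : ℝ → Fin n → ℝ) (hx : IsSolution n m T f g u x)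
    (hxX : ∀ t ∈ Icc (0:ℝ) T, x t ∈ X) (hxT : x T ∈ XT) :
    1 ≤ w (x 0) :=
  dual_feasible_implies_w_ge_one_general n m T hT f g X XT v hv w p hineq1 hineq2 hineq3 hineq4 u
    huU x hx hxX hxT
end
end

section
/- Let λ denote Lebesgue measure restricted to X. Suppose nonnegative finite Borel measures σ⁺_j, σ⁻_j, σ̂_j (j = 1,…,m) and μ on [0,T]×X, μ₀ and μ̂₀ on X, and μ_T on X_T satisfy the constraints of the primal program P: (i) for every v ∈ C¹([0,T]×ℝⁿ), ∫ v(T,y) dμ_T(y) = ∫ v(0,x) dμ₀(x) + ∫ (L_f v) dμ + Σ_{j=1}^m ∫ [L_g v]_j d(σ⁺_j − σ⁻_j); (ii) σ⁺_j + σ⁻_j + σ̂_j = μ for each j; (iii) μ₀ + μ̂₀ = λ. Suppose (v, w, p) satisfies the constraints of the dual program D: v ∈ C¹([0,T]×ℝⁿ), w : ℝⁿ → ℝ continuous with w ≥ 0 on X, continuous p₁,…,p_m with (L_f v) + Σ_{i=1}^m p_i ≤ 0 and p_i ≥ |[L_g v]_i| on [0,T]×X, w(x) ≥ v(0,x) +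 1 for x ∈ X, and v(T,x) ≥ 0 for x ∈ X_T. Then μ₀(X) ≤ ∫_X w dλ (weak duality between P and D). -/
open MeasureTheory Set Filter

noncomputable section

/-!
Test the Liouville equation (i) against the dual function `v`. Constraint (ii) and
`|L_g v| ≤ p` bound the control terms by `∫ Σ p dμ`, so by `L_f v + Σ p ≤ 0` the right-hand side
of (i) is at most `∫ v(0,·) dμ₀`, while the left-hand side is nonnegative because `v(T,·) ≥ 0`
on `X_T`. Hence `∫ v(0,·) dμ₀ ≥ 0`, and `w ≥ v(0,·) + 1` gives `μ₀(X) ≤ ∫ w dμ₀`, which is at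
most `∫_X w dλ` since `μ₀ ≤ λ` by (iii) and `w ≥ 0` on `X`.
-/

namespace MeasureTheory

variable {α : Type*} [MeasurableSpace α]

theorem _root_.Continuous.integrable_of_ae_mem_compact [TopologicalSpace α] [T2Space α]
    [OpensMeasurableSpace α] {E : Type*} [NormedAddCommGroup E] {μ : Measure α}
    [IsFiniteMeasureOnCompacts μ] {K : Set α} {f : α → E} (hf : Continuous f)
    (hK : IsCompact K) (hμK : ∀ᵐ x ∂μ, x ∈ K) : Integrable f μ := by
  rw [← Measure.restrict_eq_self_of_ae_mem hμK]
  exact hf.continuousOn.integrableOn_compact hK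

theorem integral_sub_integral_le_integral_add_add {ν₁ ν₂ ν₃ : Measure α} {F P : α → ℝ}
    (hF : Integrable F (ν₁ + ν₂ + ν₃)) (hP : Integrable P (ν₁ + ν₂ + ν₃))
    (hFP : ∀ᵐ x ∂(ν₁ + ν₂ + ν₃), |F x| ≤ P x) :
    ∫ x, F x ∂ν₁ - ∫ x, F x ∂ν₂ ≤ ∫ x, P x ∂(ν₁ + ν₂ + ν₃) := by
  simp only [integrable_add_measure, ae_add_measure_iff] at hF hP hFP
  obtain ⟨⟨hF₁, hF₂⟩, -⟩ := hF
  obtain ⟨⟨hP₁, hP₂⟩, hP₃⟩ := hP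
  obtain ⟨⟨hFP₁, hFP₂⟩, hFP₃⟩ := hFP
  have h₁ : ∫ x, F x ∂ν₁ ≤ ∫ x, P x ∂ν₁ :=
    integral_mono_ae hF₁ hP₁ (hFP₁.mono fun x hx => (le_abs_self _).trans hx)
  have h₂ : -∫ x, F x ∂ν₂ ≤ ∫ x, P x ∂ν₂ := by
    rw [← integral_neg]
    exact integral_mono_ae hF₂.neg hP₂ (hFP₂.mono fun x hx => (neg_le_abs _).trans hx)
  have h₃ : 0 ≤ ∫ x, P x ∂ν₃ :=
    integral_nonneg_of_ae (hFP₃.mono fun x hx => (abs_nonneg _).trans hx)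
  rw [integral_add_measure (hP₁.add_measure hP₂) hP₃, integral_add_measure hP₁ hP₂]
  linarith

theorem integral_add_sum_integral_sub_nonpos {ι : Type*} [Fintype ι] {μ : Measure α}
    {σp σm σh : ι → Measure α} (hσ : ∀ j, σp j + σm j + σh j = μ) {L : α → ℝ}
    {G P : ι → α → ℝ} (hL : Integrable L μ) (hG : ∀ j, Integrable (G j) μ)
    (hP : ∀ j, Integrable (P j) μ) (hLP : ∀ᵐ x ∂μ, L x + ∑ j, P j x ≤ 0)
    (hGP : ∀ j, ∀ᵐ x ∂μ, |G j x| ≤ P j x) :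
    ∫ x, L x ∂μ + ∑ j, (∫ x, G j x ∂(σp j) - ∫ x, G j x ∂(σm j)) ≤ 0 :=
  calc ∫ x, L x ∂μ + ∑ j, (∫ x, G j x ∂(σp j) - ∫ x, G j x ∂(σm j))
      ≤ ∫ x, L x ∂μ + ∑ j, ∫ x, P j x ∂μ := by
        gcongr with j
        rw [← hσ j] at hG hP hGP ⊢
        exact integral_sub_integral_le_integral_add_add (hG j) (hP j) (hGP j)
    _ = ∫ x, (L x + ∑ j, P j x) ∂μ := by
        rw [integral_add hL (integrable_finsetSum _ fun j _ => hP j),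
          integral_finsetSum _ fun j _ => hP j]
    _ ≤ 0 := integral_nonpos_of_ae hLP

theorem measureReal_univ_le_integral_of_add_one_le {μ : Measure α} [IsFiniteMeasure μ]
    {φ w : α → ℝ} (hφ : Integrable φ μ) (hw : Integrable w μ) (hφ₀ : 0 ≤ ∫ x, φ x ∂μ)
    (hφw : ∀ᵐ x ∂μ, φ x + 1 ≤ w x) : μ.real univ ≤ ∫ x, w x ∂μ :=
  calc μ.real univ = ∫ _, (1 : ℝ) ∂μ := by simp
    _ ≤ ∫ x, (w x - φ x) ∂μ :=
        integral_mono_ae (integrable_const 1) (hw.sub hφ) (hφw.mono fun x hx => by linarith)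
    _ ≤ ∫ x, w x ∂μ := by rw [integral_sub hw hφ]; linarith

end MeasureTheory

section

variable {n m : ℕ} {v : ℝ × (Fin n → ℝ) → ℝ}

theorem continuous_Lf (hv : ContDiff ℝ 1 v) {f : ℝ × (Fin n → ℝ) → Fin n → ℝ}
    (hf : Continuous f) : Continuous (Lf n f v) :=
  (hv.continuous_fderiv one_ne_zero).clm_apply (continuous_const.prodMk hf)

theorem continuous_Lg (hv : ContDiff ℝ 1 v) {g : ℝ × (Fin n → ℝ) → Fin n → Fin m → ℝ}
    (hg : Continuous g) (j : Fin m) : Continuous fun q => Lg n m g v q j :=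
  (hv.continuous_fderiv one_ne_zero).clm_apply
    (continuous_const.prodMk (continuous_pi fun i => (continuous_apply_apply i j).comp hg))

end

theorem weak_duality_P_D_general
    (n m : ℕ) (T : ℝ)
    (f : ℝ × (Fin n → ℝ) → Fin n → ℝ) (g : ℝ × (Fin n → ℝ) → Fin n → Fin m → ℝ)
    (hf : Continuous f) (hg : Continuous g)
    (X : Set (Fin n → ℝ)) (hX : IsCompact X)
    (XT : Set (Fin n → ℝ))
    -- primal feasible point: nonnegative finite Borel measures on `[0,T] × X`
    (σp σm σh : Fin m → Measure (ℝ × (Fin n → ℝ)))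
    (μ : Measure (ℝ × (Fin n → ℝ)))
    [IsFiniteMeasure μ]
    (hμX : μ (Icc (0:ℝ) T ×ˢ X)ᶜ = 0)
    -- measures on `X` and on `X_T`
    (μ₀ μh₀ : Measure (Fin n → ℝ)) [IsFiniteMeasure μ₀]
    (μT : Measure (Fin n → ℝ)) (hμTX : μT XTᶜ = 0)
    -- (i) Liouville's equation
    (hliouville : ∀ v : ℝ × (Fin n → ℝ) → ℝ, ContDiff ℝ 1 v →
      ∫ y, v (T, y) ∂μT = (∫ y, v (0, y) ∂μ₀) + (∫ q, Lf n f v q ∂μ) +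
        ∑ j, ((∫ q, Lg n m g v q j ∂(σp j)) - ∫ q, Lg n m g v q j ∂(σm j)))
    -- (ii) `σ⁺_j + σ⁻_j + σ̂_j = μ`
    (hsum : ∀ j, σp j + σm j + σh j = μ)
    -- (iii) `μ₀ + μ̂₀ = λ`, Lebesgue measure restricted to `X`
    (hlam : μ₀ + μh₀ = volume.restrict X)
    -- dual feasible point
    (v : ℝ × (Fin n → ℝ) → ℝ) (hv : ContDiff ℝ 1 v)
    (w : (Fin n → ℝ) → ℝ) (hw : Continuous w) (hwpos : ∀ y ∈ X, 0 ≤ w y)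
    (p : Fin m → ℝ × (Fin n → ℝ) → ℝ) (hp : ∀ i, Continuous (p i))
    (hineq1 : ∀ q ∈ Icc (0:ℝ) T ×ˢ X, Lf n f v q + ∑ i, p i q ≤ 0)
    (hineq2 : ∀ q ∈ Icc (0:ℝ) T ×ˢ X, ∀ i, |Lg n m g v q i| ≤ p i q)
    (hineq3 : ∀ y ∈ X, v (0, y) + 1 ≤ w y)
    (hineq4 : ∀ y ∈ XT, 0 ≤ v (T, y)) :
    (μ₀ X).toReal ≤ ∫ y in X, w y := by
  have hS : IsCompact (Icc (0:ℝ) T ×ˢ X) := isCompact_Icc.prod hX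
  have hμS : ∀ᵐ q ∂μ, q ∈ Icc (0:ℝ) T ×ˢ X := hμX
  have hdual : (∫ q, Lf n f v q ∂μ) +
      ∑ j, ((∫ q, Lg n m g v q j ∂(σp j)) - ∫ q, Lg n m g v q j ∂(σm j)) ≤ 0 :=
    integral_add_sum_integral_sub_nonpos (G := fun j q => Lg n m g v q j) hsum
      ((continuous_Lf hv hf).integrable_of_ae_mem_compact hS hμS)
      (fun j => (continuous_Lg hv hg j).integrable_of_ae_mem_compact hS hμS)
      (fun j => (hp j).integrable_of_ae_mem_compact hS hμS)
      (hμS.mono hineq1) (fun j => hμS.mono fun q hq => hineq2 q hq j)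
  have hterminal : 0 ≤ ∫ y, v (T, y) ∂μT :=
    integral_nonneg_of_ae ((show ∀ᵐ y ∂μT, y ∈ XT from hμTX).mono hineq4)
  have hinitial : 0 ≤ ∫ y, v (0, y) ∂μ₀ := by
    linarith [hliouville v hv]
  have hμ₀_le : μ₀ ≤ volume.restrict X := hlam ▸ Measure.le_add_right le_rfl
  have hX_int : ∀ φ : (Fin n → ℝ) → ℝ, Continuous φ → Integrable φ (volume.restrict X) :=
    fun φ hφ => hφ.continuousOn.integrableOn_compact hX
  have hμ₀_mem : ∀ᵐ y ∂μ₀, y ∈ X := ae_mono hμ₀_le (ae_restrict_mem hX.measurableSet)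
  calc (μ₀ X).toReal ≤ μ₀.real univ := measureReal_mono (subset_univ X)
    _ ≤ ∫ y, w y ∂μ₀ := measureReal_univ_le_integral_of_add_one_le
        ((hX_int _ (hv.continuous.comp (Continuous.prodMk_right 0))).mono_measure hμ₀_le)
        ((hX_int w hw).mono_measure hμ₀_le) hinitial (hμ₀_mem.mono hineq3)
    _ ≤ ∫ y in X, w y :=
        integral_mono_measure hμ₀_le ((ae_restrict_mem hX.measurableSet).mono hwpos) (hX_int w hw)

theorem weak_duality_P_D
    (n m : ℕ) (T : ℝ) (hT : 0 < T)
    (f : ℝ × (Fin n → ℝ) → Fin n → ℝ) (g : ℝ × (Fin n → ℝ) → Fin n → Fin m → ℝ)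
    (hf : Continuous f) (hg : Continuous g)
    (X : Set (Fin n → ℝ)) (hX : IsCompact X)
    (XT : Set (Fin n → ℝ)) (hXT : IsCompact XT) (hXTsub : XT ⊆ X)
    -- primal feasible point: nonnegative finite Borel measures on `[0,T] × X`
    (σp σm σh : Fin m → Measure (ℝ × (Fin n → ℝ)))
    (μ : Measure (ℝ × (Fin n → ℝ)))
    [∀ j, IsFiniteMeasure (σp j)] [∀ j, IsFiniteMeasure (σm j)]
    [∀ j, IsFiniteMeasure (σh j)] [IsFiniteMeasure μ]
    (hσpX : ∀ j, σp j (Icc (0:ℝ) T ×ˢ X)ᶜ = 0) (hσmX : ∀ j, σm j (Icc (0:ℝ) T ×ˢ X)ᶜ = 0)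
    (hσhX : ∀ j, σh j (Icc (0:ℝ) T ×ˢ X)ᶜ = 0) (hμX : μ (Icc (0:ℝ) T ×ˢ X)ᶜ = 0)
    -- measures on `X` and on `X_T`
    (μ₀ μh₀ : Measure (Fin n → ℝ)) [IsFiniteMeasure μ₀] [IsFiniteMeasure μh₀]
    (hμ₀X : μ₀ Xᶜ = 0) (hμh₀X : μh₀ Xᶜ = 0)
    (μT : Measure (Fin n → ℝ)) [IsFiniteMeasure μT] (hμTX : μT XTᶜ = 0)
    -- (i) Liouville's equation
    (hliouville : ∀ v : ℝ × (Fin n → ℝ) → ℝ, ContDiff ℝ 1 v →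
      ∫ y, v (T, y) ∂μT = (∫ y, v (0, y) ∂μ₀) + (∫ q, Lf n f v q ∂μ) +
        ∑ j, ((∫ q, Lg n m g v q j ∂(σp j)) - ∫ q, Lg n m g v q j ∂(σm j)))
    -- (ii) `σ⁺_j + σ⁻_j + σ̂_j = μ`
    (hsum : ∀ j, σp j + σm j + σh j = μ)
    -- (iii) `μ₀ + μ̂₀ = λ`, Lebesgue measure restricted to `X`
    (hlam : μ₀ + μh₀ = volume.restrict X)
    -- dual feasible point
    (v : ℝ × (Fin n → ℝ) → ℝ) (hv : ContDiff ℝ 1 v)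
    (w : (Fin n → ℝ) → ℝ) (hw : Continuous w) (hwpos : ∀ y ∈ X, 0 ≤ w y)
    (p : Fin m → ℝ × (Fin n → ℝ) → ℝ) (hp : ∀ i, Continuous (p i))
    (hineq1 : ∀ q ∈ Icc (0:ℝ) T ×ˢ X, Lf n f v q + ∑ i, p i q ≤ 0)
    (hineq2 : ∀ q ∈ Icc (0:ℝ) T ×ˢ X, ∀ i, |Lg n m g v q i| ≤ p i q)
    (hineq3 : ∀ y ∈ X, v (0, y) + 1 ≤ w y)
    (hineq4 : ∀ y ∈ XT, 0 ≤ v (T, y)) :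
    (μ₀ X).toReal ≤ ∫ y in X, w y :=
  weak_duality_P_D_general n m T f g hf hg X hX XT σp σm σh μ hμX μ₀ μh₀ μT hμTX hliouville hsum
    hlam v hv w hw hwpos p hp hineq1 hineq2 hineq3 hineq4
end
end
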